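/- arXiv:2605.11994 — 4 statements merged into one kernel-verified Lean document; each statement's English description precedes it below -/
import Mathlib

section
/- Let x ∈ Δ^{m-1} with x_i > 0 for all i. A vector y ∈ ℝ^m satisfies the subgradient inequality Σ_i x_i ln x_i + ⟨y, z − x⟩ ≤ Σ_i z_i ln z_i for all z ∈ Δ^{m-1} if and only if there exists α ∈ ℝ such that y_i = ln x_i + α for all i. In other words, the subdifferential of the restricted Gibbs entropy at an interior simplex point x is exactly {ln(x) + α·𝟙 : α ∈ ℝ}, where 𝟙 = (1,…,1). -/
open Real


lemma gibbsA {a z : ℝ} (ha : 0 < a) (hz : 0 ≤ z) :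
    z * Real.log a + (z - a) ≤ z * Real.log z := by
  rcases eq_or_lt_of_le hz with h | h
  · simp [← h]; linarith
  · have hl : Real.log (a / z) ≤ a / z - 1 := Real.log_le_sub_one_of_pos (by positivity)
    rw [Real.log_div (ne_of_gt ha) (ne_of_gt h)] at hl
    have := mul_le_mul_of_nonneg_left hl (le_of_lt h)
    have hz' : z * (a / z) = a := by field_simp
    nlinarith

lemma gibbsB {a z : ℝ} (ha : 0 < a) (hz : 0 ≤ z) :
    z * Real.log z ≤ z * Real.log a + (z - a) + (z - a) ^ 2 / a := by
  rcases eq_or_lt_of_le hz with h | h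
  · rw [← h]; rw [show ((0:ℝ)-a)^2 = a*a by ring]; rw [mul_self_div_self]; simp
  · have hl : Real.log (z / a) ≤ z / a - 1 := Real.log_le_sub_one_of_pos (by positivity)
    rw [Real.log_div (ne_of_gt h) (ne_of_gt ha)] at hl
    have := mul_le_mul_of_nonneg_left hl (le_of_lt h)
    have key : z * (z / a - 1) = (z - a) + (z - a) ^ 2 / a := by field_simp; ring
    nlinarith

/-- Let `x ∈ Δ^{m-1}` with `x_i > 0` for all `i`. A vector `y ∈ ℝ^m`
satisfies the subgradient inequality
`Σ_i x_i ln x_i + ⟨y, z − x⟩ ≤ Σ_i z_i ln z_i` for all `z ∈ Δ^{m-1}`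
if and only if there is `α ∈ ℝ` with `y_i = ln x_i + α` for all `i`; i.e. the
subdifferential of the restricted Gibbs entropy at an interior simplex point `x`
is exactly `{ln(x) + α·𝟙 : α ∈ ℝ}`.
(`Real.log 0 = 0` implements the convention `0 ln 0 = 0`.) -/
theorem gibbs_subdifferential_at_interior {m : ℕ} (x : Fin m → ℝ)
    (hx : x ∈ stdSimplex ℝ (Fin m)) (hpos : ∀ i, 0 < x i) (y : Fin m → ℝ) :
    (∀ z ∈ stdSimplex ℝ (Fin m),
      (∑ i, x i * Real.log (x i)) + (∑ i, y i * (z i - x i)) ≤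
        ∑ i, z i * Real.log (z i)) ↔
    ∃ α : ℝ, ∀ i, y i = Real.log (x i) + α := by
  obtain ⟨hxnn, hxsum⟩ := hx
  set S := ∑ i, x i * Real.log (x i) with hS
  set P := ∑ i, y i * x i with hP
  constructor
  · intro h
    -- key inequality: for every j, y j - P ≤ log (x j) - S
    have key : ∀ j, y j - P ≤ Real.log (x j) - S := by
      intro j
      set C : ℝ := ∑ i, ((if i = j then (1:ℝ) else 0) - x i) ^ 2 / x i with hC
      have hCnn : 0 ≤ C := Finset.sum_nonneg fun i _ => div_nonneg (sq_nonneg _) (hpos i).le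
      have step : ∀ t : ℝ, 0 < t → t ≤ 1 → y j - P ≤ Real.log (x j) - S + t * C := by
        intro t ht ht1
        set z : Fin m → ℝ := fun i => (1 - t) * x i + t * (if i = j then 1 else 0) with hzdef
        have hz : z ∈ stdSimplex ℝ (Fin m) := by
          constructor
          · intro i
            have := (hpos i).le
            dsimp [z]
            have h0 : (0:ℝ) ≤ if i = j then (1:ℝ) else 0 := by split <;> norm_num
            nlinarith
          · dsimp only [z]
            rw [Finset.sum_add_distrib, ← Finset.mul_sum, ← Finset.mul_sum, hxsum,
              Finset.sum_ite_eq' Finset.univ j (fun _ => (1:ℝ))]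
            simp
        have hmain := h z hz
        have e1 : ∑ i, y i * (z i - x i) = t * (y j - P) := by
          have : ∀ i ∈ Finset.univ, y i * (z i - x i)
              = t * (if i = j then y i else 0) - t * (y i * x i) := by
            intro i _
            dsimp [z]
            split <;> ring
          rw [Finset.sum_congr rfl this, Finset.sum_sub_distrib, ← Finset.mul_sum,
            ← Finset.mul_sum, Finset.sum_ite_eq' Finset.univ j y]
          simp [hP]; ring
        have e2 : ∑ i, z i * Real.log (x i) = S + t * (Real.log (x j) - S) := by
          have : ∀ i ∈ Finset.univ, z i * Real.log (x i)
              = x i * Real.log (x i) + (t * (if i = j then Real.log (x i) else 0)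
                - t * (x i * Real.log (x i))) := by
            intro i _
            dsimp [z]
            split <;> ring
          rw [Finset.sum_congr rfl this, Finset.sum_add_distrib, Finset.sum_sub_distrib,
            ← Finset.mul_sum, ← Finset.mul_sum,
            Finset.sum_ite_eq' Finset.univ j (fun i => Real.log (x i))]
          simp [hS]; ring
        have e3 : ∑ i, (z i - x i) = 0 := by
          have : ∀ i ∈ Finset.univ, z i - x i
              = t * (if i = j then (1:ℝ) else 0) - t * x i := by
            intro i _; dsimp [z]; ring
          rw [Finset.sum_congr rfl this, Finset.sum_sub_distrib, ← Finset.mul_sum,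
            ← Finset.mul_sum, Finset.sum_ite_eq' Finset.univ j (fun _ => (1:ℝ)), hxsum]
          simp
        have e4 : ∑ i, (z i - x i) ^ 2 / x i = t ^ 2 * C := by
          rw [hC, Finset.mul_sum]
          refine Finset.sum_congr rfl fun i _ => ?_
          have hxi := (hpos i).ne'
          dsimp [z]
          split <;> (field_simp; ring)
        have hB : ∑ i, z i * Real.log (z i)
            ≤ ∑ i, (z i * Real.log (x i) + (z i - x i) + (z i - x i) ^ 2 / x i) :=
          Finset.sum_le_sum fun i _ => gibbsB (hpos i) (hz.1 i)
        rw [Finset.sum_add_distrib, Finset.sum_add_distrib, e2, e3, e4] at hB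
        rw [e1] at hmain
        have : t * (y j - P) ≤ t * (Real.log (x j) - S) + t ^ 2 * C := by linarith
        have htc : y j - P ≤ Real.log (x j) - S + t * C := by nlinarith
        exact htc
      refine le_of_forall_pos_le_add fun ε hε => ?_
      have htpos : 0 < min 1 (ε / (C + 1)) := lt_min one_pos (by positivity)
      have := step _ htpos (min_le_left _ _)
      have h2 : min 1 (ε / (C + 1)) * C ≤ ε := by
        have h3 : min 1 (ε / (C + 1)) ≤ ε / (C + 1) := min_le_right _ _
        have h4 : min 1 (ε / (C + 1)) * C ≤ (ε / (C + 1)) * C :=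
          mul_le_mul_of_nonneg_right h3 hCnn
        have h5 : (ε / (C + 1)) * C ≤ ε := by
          rw [div_mul_eq_mul_div, div_le_iff₀ (by linarith)]
          nlinarith
        linarith
      linarith
    -- now the equality via the weighted sum
    refine ⟨P - S, fun j => ?_⟩
    have hnn : ∀ j ∈ Finset.univ, (0:ℝ) ≤ x j * ((Real.log (x j) - S) - (y j - P)) :=
      fun j _ => mul_nonneg (hpos j).le (by linarith [key j])
    have hsum : ∑ j, x j * ((Real.log (x j) - S) - (y j - P)) = 0 := by
      have : ∀ j ∈ Finset.univ, x j * ((Real.log (x j) - S) - (y j - P))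
          = x j * Real.log (x j) - S * x j - (y j * x j) + P * x j := by
        intro j _; ring
      rw [Finset.sum_congr rfl this]
      simp only [Finset.sum_add_distrib, Finset.sum_sub_distrib, ← Finset.mul_sum, hxsum]
      simp [hS, hP]
    have := (Finset.sum_eq_zero_iff_of_nonneg hnn).mp hsum j (Finset.mem_univ j)
    have hxj := (hpos j).ne'
    have : (Real.log (x j) - S) - (y j - P) = 0 := by
      rcases mul_eq_zero.mp this with h | h
      · exact absurd h hxj
      · exact h
    linarith
  · rintro ⟨α, hα⟩ z ⟨hznn, hzsum⟩
    have e1 : ∑ i, y i * (z i - x i)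
        = (∑ i, z i * Real.log (x i)) - S + α * ((∑ i, z i) - ∑ i, x i) := by
      have : ∀ i ∈ Finset.univ, y i * (z i - x i)
          = z i * Real.log (x i) - x i * Real.log (x i) + (α * z i - α * x i) := by
        intro i _; rw [hα i]; ring
      rw [Finset.sum_congr rfl this]
      simp only [Finset.sum_add_distrib, Finset.sum_sub_distrib, ← Finset.mul_sum, hS]
      ring
    rw [e1, hxsum, hzsum]
    have hA : ∑ i, (z i * Real.log (x i) + (z i - x i)) ≤ ∑ i, z i * Real.log (z i) :=
      Finset.sum_le_sum fun i _ => gibbsA (hpos i) (hznn i)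
    rw [Finset.sum_add_distrib, Finset.sum_sub_distrib, hxsum, hzsum] at hA
    simp only [sub_self, add_zero] at hA ⊢
    linarith
end

section
/- Let v_1,…,v_q ∈ ℝⁿ with Σ_{i=1}^q v_i = 0, and suppose the matrix V ∈ ℝ^{n×q} with columns v_i has full row rank (equivalently, Vᵀ : ℝⁿ → ℝ^q is injective). Then the function y ↦ lse(Vᵀy) = ln(Σ_{i=1}^q exp(⟨v_i, y⟩)) is strictly convex on ℝⁿ. -/
open Real Finset

/-! Writing `α = z - lse z` and `β = w - lse w`, both `exp ∘ α` and `exp ∘ β` are probability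
vectors, and `lse (a z + b w) - (a lse z + b lse w) = log ∑ exp (a α + b β)`. Convexity of `exp`
bounds the sum by `a ∑ exp α + b ∑ exp β = 1`, strictly as soon as `α ≠ β`, i.e. as soon as `z - w`
is not a constant vector. Since `∑ vᵢ = 0`, the coordinates of `Vᵀ (x - y)` sum to zero, so it
can only be constant if it vanishes, and then `x = y` by injectivity. -/

noncomputable def logSumExp {ι : Type*} [Fintype ι] (z : ι → ℝ) : ℝ := log (∑ i, exp (z i))

section LogSumExp

variable {ι : Type*} [Fintype ι]

lemma sum_exp_sub_logSumExp [Nonempty ι] (z : ι → ℝ) : ∑ i, exp (z i - logSumExp z) = 1 := by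
  have hpos : 0 < ∑ i, exp (z i) := sum_pos (fun i _ => exp_pos _) univ_nonempty
  simp_rw [exp_sub, logSumExp, exp_log hpos, ← sum_div, div_self hpos.ne']

lemma logSumExp_smul_add_smul_lt {z w : ι → ℝ} (hzw : ∀ c : ℝ, ∃ i, z i - w i ≠ c) {a b : ℝ}
    (ha : 0 < a) (hb : 0 < b) (hab : a + b = 1) :
    logSumExp (a • z + b • w) < a * logSumExp z + b * logSumExp w := by
  obtain ⟨i₀, hi₀⟩ := hzw (logSumExp z - logSumExp w)
  have : Nonempty ι := ⟨i₀⟩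
  set α := fun i => z i - logSumExp z
  set β := fun i => w i - logSumExp w
  have hlt : ∑ i, exp (a * α i + b * β i) < 1 := calc
    ∑ i, exp (a * α i + b * β i) < ∑ i, (a * exp (α i) + b * exp (β i)) := by
      refine sum_lt_sum (fun i _ => convexOn_exp.2 trivial trivial ha.le hb.le hab)
        ⟨i₀, mem_univ _, strictConvexOn_exp.2 trivial trivial ?_ ha hb hab⟩
      intro h
      exact hi₀ (by simp only [α, β] at h; linarith)
    _ = a * ∑ i, exp (α i) + b * ∑ i, exp (β i) := by rw [sum_add_distrib, mul_sum, mul_sum]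
    _ = 1 := by rw [sum_exp_sub_logSumExp, sum_exp_sub_logSumExp, mul_one, mul_one, hab]
  have hsum : ∑ i, exp ((a • z + b • w) i) =
      (∑ i, exp (a * α i + b * β i)) * exp (a * logSumExp z + b * logSumExp w) := by
    rw [sum_mul]
    refine sum_congr rfl fun i _ => ?_
    rw [← exp_add]
    simp only [α, β, Pi.add_apply, Pi.smul_apply, smul_eq_mul]
    ring_nf
  rw [logSumExp, log_lt_iff_lt_exp (sum_pos (fun i _ => exp_pos _) univ_nonempty), hsum]
  exact mul_lt_of_lt_one_left (exp_pos _) hlt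

theorem strictConvexOn_logSumExp_comp {E : Type*} [AddCommGroup E] [Module ℝ E]
    (A : E →ₗ[ℝ] ι → ℝ) (hA : ∀ d c, A d = Function.const ι c → d = 0) :
    StrictConvexOn ℝ Set.univ (logSumExp ∘ A) := by
  refine ⟨convex_univ, fun x _ y _ hxy a b ha hb hab => ?_⟩
  have hzw : ∀ c : ℝ, ∃ i, A x i - A y i ≠ c := by
    intro c
    by_contra! h
    exact hxy (sub_eq_zero.1 (hA (x - y) c (by ext i; simp [h])))
  simpa using logSumExp_smul_add_smul_lt hzw ha hb hab

end LogSumExp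

namespace Matrix

variable {m n R : Type*} [Fintype m] [Fintype n] [Semiring R]

lemma sum_mulVec_eq_zero {M : Matrix m n R} (hM : 1 ᵥ* M = 0) (d : n → R) :
    ∑ i, (M *ᵥ d) i = 0 := by
  rw [← one_dotProduct, dotProduct_mulVec, hM, zero_dotProduct]

lemma mulVec_eq_zero_of_eq_const [IsAddTorsionFree R] {M : Matrix m n R} (hM : 1 ᵥ* M = 0)
    {d : n → R} {c : R} (hd : M *ᵥ d = Function.const m c) : M *ᵥ d = 0 := by
  funext i
  have : Nonempty m := ⟨i⟩
  have hcard : Fintype.card m • c = 0 := by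
    simpa [hd] using sum_mulVec_eq_zero hM d
  rw [hd, Function.const_apply, (nsmul_eq_zero_iff_right Fintype.card_ne_zero).1 hcard,
    Pi.zero_apply]

end Matrix

/-- Let `v_1, …, v_q ∈ ℝⁿ` with `Σ_i v_i = 0`, and suppose the matrix
`V` with columns `v_i` has full row rank, i.e. `Vᵀ : ℝⁿ → ℝ^q`, `y ↦ (⟨v_i, y⟩)_i`,
is injective.  Then `y ↦ lse (Vᵀ y) = ln (Σ_i exp ⟨v_i, y⟩)` is strictly convex
on `ℝⁿ`. -/
theorem lse_comp_Vt_strictConvex {n q : ℕ} (v : Fin q → Fin n → ℝ)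
    (hsum : ∑ i, v i = 0)
    (hinj : Function.Injective
      (fun y : Fin n → ℝ => fun i : Fin q => ∑ j, v i j * y j)) :
    StrictConvexOn ℝ Set.univ
      (fun y : Fin n → ℝ => Real.log (∑ i, Real.exp (∑ j, v i j * y j))) := by
  refine strictConvexOn_logSumExp_comp (Matrix.of v).mulVecLin fun d c hd => hinj ?_
  change (Matrix.of v).mulVec d = (Matrix.of v).mulVec 0
  rw [Matrix.mulVec_zero]
  refine Matrix.mulVec_eq_zero_of_eq_const ?_ hd
  funext j
  simpa [Matrix.vecMul, dotProduct, Finset.sum_apply] using congrFun hsum j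
end

section
/- Let v_1,…,v_q ∈ ℝⁿ with Σ_{i=1}^q v_i = 0 such that P := conv{v_1,…,v_q} has nonempty interior, and let V ∈ ℝ^{n×q} be the matrix with columns v_i. Then the map Φ(y) := V softmax(Vᵀy) is surjective onto the interior of P: for every x ∈ int(P) there exists y ∈ ℝⁿ with V softmax(Vᵀy) = x. -/
/-!
The map `φ ↦ Σ_i softmax(φ(v_i))_i • v_i` on the dual space is the gradient of the convex
function `φ ↦ log Σ_i exp(φ(v_i))`, so its preimages of `x` are the critical points of
`F(φ) = log Σ_i exp(φ(v_i)) - φ(x)`. If a ball of radius `ε` around `x` lies in the convex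
hull of the `v_i`, then `max_i φ(v_i) ≥ φ(x) + ε‖φ‖/2`, hence `F(φ) ≥ ε‖φ‖/2`. So `F` is
coercive on the finite-dimensional dual space, attains its minimum, and the minimiser is the
required critical point. In coordinates, `φ` is `y ↦ Σ_j y_j φ(e_j)`.
-/

open Real

/-- The softmax map `softmax(y)_i = exp(y_i) / Σ_j exp(y_j)`. -/
noncomputable def softmax {m : ℕ} (y : Fin m → ℝ) : Fin m → ℝ :=
  fun i => Real.exp (y i) / ∑ j, Real.exp (y j)

open Set Filter Topology

section

variable {E : Type*} [NormedAddCommGroup E] [NormedSpace ℝ E] {q : ℕ}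

theorem ContinuousLinearMap.exists_norm_lt_one_half_opNorm_le_apply (φ : StrongDual ℝ E) :
    ∃ u : E, ‖u‖ < 1 ∧ ‖φ‖ / 2 ≤ φ u := by
  rcases (norm_nonneg φ).eq_or_lt with hφ | hφ
  · exact ⟨0, by simp, by simp [← hφ]⟩
  obtain ⟨z, hz, hφz⟩ := φ.exists_lt_apply_of_lt_opNorm (half_lt_self hφ)
  rcases le_total 0 (φ z) with hpos | hneg
  · exact ⟨z, hz, by rw [Real.norm_of_nonneg hpos] at hφz; exact hφz.le⟩
  · exact ⟨-z, by rwa [norm_neg], by rw [Real.norm_of_nonpos hneg] at hφz; simpa using hφz.le⟩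

theorem exists_add_mul_norm_le_apply_of_mem_interior_convexHull {v : Fin q → E} {x : E}
    (hx : x ∈ interior (convexHull ℝ (range v))) :
    ∃ c > 0, ∀ φ : StrongDual ℝ E, ∃ i, φ x + c * ‖φ‖ ≤ φ (v i) := by
  obtain ⟨ε, hε, hball⟩ := Metric.mem_nhds_iff.mp (mem_interior_iff_mem_nhds.mp hx)
  refine ⟨ε / 2, half_pos hε, fun φ => ?_⟩
  obtain ⟨u, hu, hφu⟩ := φ.exists_norm_lt_one_half_opNorm_le_apply
  have hw : x + ε • u ∈ convexHull ℝ (range v) := hball <| by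
    rw [Metric.mem_ball, dist_self_add_left, norm_smul, Real.norm_of_nonneg hε.le]
    exact mul_lt_of_lt_one_right hε hu
  obtain ⟨_, ⟨i, rfl⟩, hi⟩ :=
    ((φ : E →ₗ[ℝ] ℝ).convexOn convex_univ).exists_ge_of_mem_convexHull (subset_univ _) hw
  refine ⟨i, le_trans ?_ hi⟩
  simp only [ContinuousLinearMap.coe_coe, map_add, map_smul, smul_eq_mul]
  linarith [mul_le_mul_of_nonneg_left hφu hε.le]

theorem le_log_sum_exp (z : Fin q → ℝ) (i : Fin q) : z i ≤ log (∑ j, exp (z j)) := by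
  rw [le_log_iff_exp_le (Finset.sum_pos (fun j _ => exp_pos _) ⟨i, Finset.mem_univ i⟩)]
  exact Finset.single_le_sum (fun j _ => (exp_pos (z j)).le) (Finset.mem_univ i)

noncomputable def softmaxPotential (v : Fin q → E) (x : E) (φ : StrongDual ℝ E) : ℝ :=
  log (∑ i, exp (φ (v i))) - φ x

theorem hasFDerivAt_softmaxPotential [Nonempty (Fin q)] (v : Fin q → E) (x : E)
    (φ : StrongDual ℝ E) :
    HasFDerivAt (softmaxPotential v x)
      (∑ i, softmax (fun i => φ (v i)) i • ContinuousLinearMap.apply ℝ ℝ (v i)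
        - ContinuousLinearMap.apply ℝ ℝ x) φ := by
  have hS : ∑ i, exp (φ (v i)) ≠ 0 :=
    (Finset.sum_pos (fun j _ => exp_pos _) Finset.univ_nonempty).ne'
  refine (((HasFDerivAt.fun_sum fun i _ =>
    (ContinuousLinearMap.apply ℝ ℝ (v i)).hasFDerivAt.exp (x := φ)).log hS).sub
    (ContinuousLinearMap.apply ℝ ℝ x).hasFDerivAt).congr_fderiv ?_
  ext ψ
  simp [softmax, Finset.mul_sum, div_eq_inv_mul, mul_assoc]

theorem mul_norm_le_softmaxPotential {v : Fin q → E} {x : E} {c : ℝ}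
    (hc : ∀ φ : StrongDual ℝ E, ∃ i, φ x + c * ‖φ‖ ≤ φ (v i)) (φ : StrongDual ℝ E) :
    c * ‖φ‖ ≤ softmaxPotential v x φ := by
  obtain ⟨i, hi⟩ := hc φ
  have := le_log_sum_exp (fun j => φ (v j)) i
  rw [softmaxPotential]
  linarith

theorem tendsto_softmaxPotential_cocompact [FiniteDimensional ℝ E] {v : Fin q → E} {x : E}
    (hx : x ∈ interior (convexHull ℝ (range v))) :
    Tendsto (softmaxPotential v x) (cocompact (StrongDual ℝ E)) atTop := by
  obtain ⟨c, hc, hcoer⟩ := exists_add_mul_norm_le_apply_of_mem_interior_convexHull hx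
  exact tendsto_atTop_mono (mul_norm_le_softmaxPotential hcoer)
    (tendsto_norm_cocompact_atTop.const_mul_atTop hc)

theorem exists_softmax_smul_eq_of_mem_interior_convexHull [FiniteDimensional ℝ E]
    {v : Fin q → E} {x : E} (hx : x ∈ interior (convexHull ℝ (range v))) :
    ∃ φ : StrongDual ℝ E, ∑ i, softmax (fun i => φ (v i)) i • v i = x := by
  have : Nonempty (Fin q) :=
    range_nonempty_iff_nonempty.1 (convexHull_nonempty_iff.1 ⟨x, interior_subset hx⟩)
  have hderiv := hasFDerivAt_softmaxPotential v x
  obtain ⟨φ, hφ⟩ := Continuous.exists_forall_le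
    (continuous_iff_continuousAt.2 fun φ => (hderiv φ).continuousAt)
    (tendsto_softmaxPotential_cocompact hx)
  refine ⟨φ, (SeparatingDual.eq_iff_forall_dual_eq (R := ℝ)).2 fun ψ => ?_⟩
  have hmin : IsLocalMin (softmaxPotential v x) φ := Eventually.of_forall hφ
  have hcrit := congrArg (· ψ) (hmin.hasFDerivAt_eq_zero (hderiv φ))
  simpa [sub_eq_zero] using hcrit

end

theorem softmax_param_surjective_general {n q : ℕ} (v : Fin q → Fin n → ℝ)
    (x : Fin n → ℝ) (hx : x ∈ interior (convexHull ℝ (Set.range v))) :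
    ∃ y : Fin n → ℝ,
      (∑ i, softmax (fun i : Fin q => ∑ j, v i j * y j) i • v i) = x := by
  obtain ⟨φ, hφ⟩ := exists_softmax_smul_eq_of_mem_interior_convexHull hx
  refine ⟨fun j => φ (Pi.single j 1), ?_⟩
  have hcoord : ∀ w : Fin n → ℝ, ∑ j, w j * φ (Pi.single j 1) = φ w := fun w => by
    conv_rhs => rw [pi_eq_sum_univ' w, map_sum]
    simp only [map_smul, smul_eq_mul]
  simpa only [hcoord] using hφ

/-- Let `v_1, …, v_q ∈ ℝⁿ` with `Σ_i v_i = 0` and such that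
`P = conv {v_1, …, v_q}` has nonempty interior.  Then `Φ(y) = V softmax (Vᵀ y)`
is surjective onto `int P`: for every `x ∈ int P` there is `y ∈ ℝⁿ` with
`Σ_i softmax(Vᵀy)_i v_i = x`. -/
theorem softmax_param_surjective {n q : ℕ} (v : Fin q → Fin n → ℝ)
    (hsum : ∑ i, v i = 0)
    (hint : (interior (convexHull ℝ (Set.range v))).Nonempty)
    (x : Fin n → ℝ) (hx : x ∈ interior (convexHull ℝ (Set.range v))) :
    ∃ y : Fin n → ℝ,
      (∑ i, softmax (fun i : Fin q => ∑ j, v i j * y j) i • v i) = x :=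
  softmax_param_surjective_general v x hx
end

section
/- Let v_1,…,v_q ∈ ℝⁿ be such that P := conv{v_1,…,v_q} has nonempty interior, let R : ℝⁿ → ℝ ∪ {+∞} be defined by R(x) = inf{ Σ_{i=1}^q λ_i ln λ_i : λ ∈ Δ^{q-1}, Vλ = x } (V the matrix with columns v_i; infimum over the empty set equal to +∞), and let (Ω, μ) be a finite measure space. If η and q̃ are measurable, essentially bounded ℝⁿ-valued functions on Ω with values in P a.e., each uniformly bounded away from ∂P (i.e. ess inf_x dist(η(x), ∂P) > 0 and ess inf_x dist(q̃(x), ∂P) > 0), and μ({x : η(x) ≠ q̃(x)}) > 0, then for every t ∈ (0,1), ∫_Ω R(t η + (1−t) q̃) dμ < t ∫_Ω R(η) dμ + (1−t) ∫_Ω R(q̃) dμ. That is, the integral functional I_R is strictly convex on the class of designs uniformly bounded away from ∂P. -/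
/-!
`R(x)` minimises the strictly convex function `l ↦ Σ lᵢ ln lᵢ` over the compact fibre
`{l ∈ Δ^{q-1} : Vl = x}`; the minimum is attained, and mixing the minimisers for `x ≠ y` shows that
`R` is strictly convex, and bounded, on `P`. A convex function is continuous on the
interior of `P`, where the designs live a.e. by the distance condition, so all three integrands are
integrable; the pointwise convexity gap is then a.e. nonnegative and positive on `{η ≠ τ}`, a set of
positive measure.
-/

open Real MeasureTheory

/-- The polytopal entropy `R(x) = inf { Σ_i λ_i ln λ_i : λ ∈ Δ^{q-1}, Vλ = x }`,
with values in `EReal` and the infimum over the empty set equal to `+∞`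
(`sInf ∅ = ⊤` in `EReal`).  Here `v i` is the `i`-th column of `V`, so that
`Vλ = Σ_i λ_i v_i`, and `Real.log 0 = 0` implements the convention `0 ln 0 = 0`.
On the polytope `P = conv {v_1, …, v_q}` the value `R(x)` is a (finite) real
number, extracted below with `EReal.toReal`. -/
noncomputable def Rent {n q : ℕ} (v : Fin q → EuclideanSpace ℝ (Fin n))
    (x : EuclideanSpace ℝ (Fin n)) : EReal :=
  sInf {t : EReal | ∃ l ∈ stdSimplex ℝ (Fin q), (∑ i, l i • v i) = x ∧
      t = ((∑ i, l i * Real.log (l i) : ℝ) : EReal)}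

open Set

section NegEntropy

variable {ι : Type*} [Fintype ι]

noncomputable def negEntropy (l : ι → ℝ) : ℝ := ∑ i, l i * log (l i)

lemma continuous_negEntropy : Continuous (negEntropy (ι := ι)) :=
  continuous_finsetSum _ fun i _ => continuous_mul_log.comp (continuous_apply i)

lemma strictConvexOn_negEntropy : StrictConvexOn ℝ (stdSimplex ℝ ι) negEntropy := by
  refine ⟨convex_stdSimplex ℝ ι, fun l hl m hm hne a b ha hb hab => ?_⟩
  obtain ⟨i₀, hi₀⟩ := Function.ne_iff.mp hne
  simp only [negEntropy, smul_eq_mul, Finset.mul_sum, ← Finset.sum_add_distrib]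
  refine Finset.sum_lt_sum (fun i _ => ?_) ⟨i₀, Finset.mem_univ _, ?_⟩
  · simpa using strictConvexOn_mul_log.convexOn.2 (hl.1 i) (hm.1 i) ha.le hb.le hab
  · simpa using strictConvexOn_mul_log.2 (hl.1 i₀) (hm.1 i₀) hi₀ ha hb hab

lemma exists_bound_negEntropy : ∃ C, ∀ l ∈ stdSimplex ℝ ι, ‖negEntropy l‖ ≤ C :=
  (isCompact_stdSimplex ℝ ι).exists_bound_of_continuousOn continuous_negEntropy.continuousOn

end NegEntropy

lemma convexHull_range_eq_image_stdSimplex {R E ι : Type*} [Field R] [LinearOrder R]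
    [IsStrictOrderedRing R] [AddCommGroup E] [Module R E] [Fintype ι] (v : ι → E) :
    convexHull R (range v) = Fintype.linearCombination R v '' stdSimplex R ι := by
  classical
  rw [← convexHull_basis_eq_stdSimplex, LinearMap.image_convexHull, ← range_comp]
  congr 1
  ext i
  simp [Fintype.linearCombination_apply, Finset.sum_ite_eq]

def simplexFiber {ι E : Type*} [Fintype ι] [AddCommGroup E] [Module ℝ E] (v : ι → E) (x : E) :
    Set (ι → ℝ) :=
  {l ∈ stdSimplex ℝ ι | ∑ i, l i • v i = x}

section Rent

variable {n q : ℕ} (v : Fin q → EuclideanSpace ℝ (Fin n))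

lemma Rent_eq_of_isMinOn {x : EuclideanSpace ℝ (Fin n)} {l : Fin q → ℝ}
    (hl : l ∈ simplexFiber v x) (hmin : IsMinOn negEntropy (simplexFiber v x) l) :
    Rent v x = negEntropy l := by
  refine le_antisymm (sInf_le ⟨l, hl.1, hl.2, rfl⟩) (le_sInf ?_)
  rintro _ ⟨m, hm, hmx, rfl⟩
  exact EReal.coe_le_coe_iff.2 (hmin ⟨hm, hmx⟩)

lemma exists_isMinOn_Rent_eq {x : EuclideanSpace ℝ (Fin n)}
    (hx : x ∈ convexHull ℝ (range v)) :
    ∃ l ∈ simplexFiber v x, IsMinOn negEntropy (simplexFiber v x) l ∧ Rent v x = negEntropy l := by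
  have hcompact : IsCompact (simplexFiber v x) :=
    (isCompact_stdSimplex ℝ (Fin q)).inter_right
      (isClosed_eq (Fintype.linearCombination ℝ v).continuous_of_finiteDimensional
        continuous_const)
  have hne : (simplexFiber v x).Nonempty := by
    rw [convexHull_range_eq_image_stdSimplex] at hx
    obtain ⟨l, hl, hlx⟩ := hx
    exact ⟨l, hl, hlx⟩
  obtain ⟨l, hl, hmin⟩ := hcompact.exists_isMinOn hne continuous_negEntropy.continuousOn
  exact ⟨l, hl, hmin, Rent_eq_of_isMinOn v hl hmin⟩

lemma Rent_toReal_le_negEntropy {x : EuclideanSpace ℝ (Fin n)} {l : Fin q → ℝ}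
    (hl : l ∈ simplexFiber v x) : (Rent v x).toReal ≤ negEntropy l := by
  have hx : x ∈ convexHull ℝ (range v) := by
    rw [convexHull_range_eq_image_stdSimplex]
    exact ⟨l, hl⟩
  obtain ⟨l₀, -, hmin, hR⟩ := exists_isMinOn_Rent_eq v hx
  rw [hR, EReal.toReal_coe]
  exact hmin hl

lemma strictConvexOn_Rent_toReal :
    StrictConvexOn ℝ (convexHull ℝ (range v)) fun x => (Rent v x).toReal := by
  refine ⟨convex_convexHull ℝ _, fun x hx y hy hxy a b ha hb hab => ?_⟩
  obtain ⟨l, hl, -, hRx⟩ := exists_isMinOn_Rent_eq v hx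
  obtain ⟨m, hm, -, hRy⟩ := exists_isMinOn_Rent_eq v hy
  have hlm : l ≠ m := by
    rintro rfl
    exact hxy (hl.2.symm.trans hm.2)
  have hcomb : a • l + b • m ∈ simplexFiber v (a • x + b • y) := by
    refine ⟨convex_stdSimplex ℝ _ hl.1 hm.1 ha.le hb.le hab, ?_⟩
    simp only [Pi.add_apply, Pi.smul_apply, smul_eq_mul, add_smul, mul_smul,
      Finset.sum_add_distrib, ← Finset.smul_sum, hl.2, hm.2]
  calc (Rent v (a • x + b • y)).toReal ≤ negEntropy (a • l + b • m) :=
        Rent_toReal_le_negEntropy v hcomb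
    _ < a • negEntropy l + b • negEntropy m :=
        strictConvexOn_negEntropy.2 hl.1 hm.1 hlm ha hb hab
    _ = a • (Rent v x).toReal + b • (Rent v y).toReal := by
        rw [hRx, hRy, EReal.toReal_coe, EReal.toReal_coe]

lemma exists_bound_Rent_toReal : ∃ C, ∀ x ∈ convexHull ℝ (range v), ‖(Rent v x).toReal‖ ≤ C := by
  obtain ⟨C, hC⟩ := exists_bound_negEntropy (ι := Fin q)
  refine ⟨C, fun x hx => ?_⟩
  obtain ⟨l, hl, -, hR⟩ := exists_isMinOn_Rent_eq v hx
  rw [hR, EReal.toReal_coe]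
  exact hC l hl.1

end Rent

lemma mem_interior_of_infDist_frontier_pos {α : Type*} [PseudoMetricSpace α] {s : Set α} {x : α}
    (hx : x ∈ s) (hd : 0 < Metric.infDist x (frontier s)) : x ∈ interior s := by
  rw [← self_sdiff_frontier]
  exact ⟨hx, fun h => hd.ne' (Metric.infDist_zero_of_mem h)⟩

section Integral

variable {Ω : Type*} [MeasurableSpace Ω] {μ : Measure Ω}

lemma integrable_comp_of_continuousOn_of_bound [IsFiniteMeasure μ] {E : Type*}
    [TopologicalSpace E] [MeasurableSpace E] [OpensMeasurableSpace E] {f : E → ℝ} {U : Set E}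
    (hU : MeasurableSet U) (hf : ContinuousOn f U) {C : ℝ} (hC : ∀ x ∈ U, ‖f x‖ ≤ C)
    {g : Ω → E} (hg : Measurable g) (hgU : ∀ᵐ ω ∂μ, g ω ∈ U) :
    Integrable (fun ω => f (g ω)) μ := by
  classical
  have hpiecewise : Measurable (U.piecewise f 0) :=
    hf.measurable_piecewise continuousOn_const hU
  refine Integrable.mono' (integrable_const C) ?_ (hgU.mono fun ω h => hC _ h)
  refine (hpiecewise.comp hg).aestronglyMeasurable.congr (hgU.mono fun ω h => ?_)
  simp [h]

lemma StrictConvexOn.integral_comp_add_lt {E : Type*} [AddCommGroup E] [Module ℝ E]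
    {s : Set E} {f : E → ℝ} (hf : StrictConvexOn ℝ s f) {η τ : Ω → E}
    (hη : ∀ᵐ ω ∂μ, η ω ∈ s) (hτ : ∀ᵐ ω ∂μ, τ ω ∈ s)
    {a b : ℝ} (ha : 0 < a) (hb : 0 < b) (hab : a + b = 1)
    (hfη : Integrable (fun ω => f (η ω)) μ) (hfτ : Integrable (fun ω => f (τ ω)) μ)
    (hfητ : Integrable (fun ω => f (a • η ω + b • τ ω)) μ)
    (hne : 0 < μ {ω | η ω ≠ τ ω}) :
    ∫ ω, f (a • η ω + b • τ ω) ∂μ < a * ∫ ω, f (η ω) ∂μ + b * ∫ ω, f (τ ω) ∂μ := by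
  set gap : Ω → ℝ := fun ω => a * f (η ω) + b * f (τ ω) - f (a • η ω + b • τ ω)
  have hsum : Integrable (fun ω => a * f (η ω) + b * f (τ ω)) μ :=
    (hfη.const_mul a).add (hfτ.const_mul b)
  have hgap_int : Integrable gap μ := hsum.sub hfητ
  have hgap_nonneg : 0 ≤ᵐ[μ] gap := by
    filter_upwards [hη, hτ] with ω hηω hτω
    exact sub_nonneg.2 (hf.convexOn.2 hηω hτω ha.le hb.le hab)
  have hne_subset_support : {ω | η ω ≠ τ ω} ≤ᵐ[μ] Function.support gap := by
    filter_upwards [hη, hτ] with ω hηω hτω hne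
    exact (sub_pos.2 (hf.2 hηω hτω hne ha hb hab)).ne'
  have hint_pos : 0 < ∫ ω, gap ω ∂μ :=
    (integral_pos_iff_support_of_nonneg_ae hgap_nonneg hgap_int).2
      (hne.trans_le (measure_mono_ae hne_subset_support))
  rw [integral_sub hsum hfητ, integral_add (hfη.const_mul a) (hfτ.const_mul b),
    integral_const_mul, integral_const_mul] at hint_pos
  linarith

end Integral

theorem integral_functional_strictly_convex_general {n q : ℕ}
    (v : Fin q → EuclideanSpace ℝ (Fin n))
    {Ω : Type*} [MeasurableSpace Ω] (μ : Measure Ω) [IsFiniteMeasure μ]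
    (η τ : Ω → EuclideanSpace ℝ (Fin n))
    (hηm : Measurable η) (hτm : Measurable τ)
    (hηP : ∀ᵐ x ∂μ, η x ∈ convexHull ℝ (Set.range v))
    (hτP : ∀ᵐ x ∂μ, τ x ∈ convexHull ℝ (Set.range v))
    (hηd : ∃ ε > 0, ∀ᵐ x ∂μ,
      ε ≤ Metric.infDist (η x) (frontier (convexHull ℝ (Set.range v))))
    (hτd : ∃ ε > 0, ∀ᵐ x ∂μ,
      ε ≤ Metric.infDist (τ x) (frontier (convexHull ℝ (Set.range v))))
    (hneq : 0 < μ {x | η x ≠ τ x})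
    (t : ℝ) (ht : t ∈ Set.Ioo (0 : ℝ) 1) :
    (∫ x, (Rent v (t • η x + (1 - t) • τ x)).toReal ∂μ) <
      t * (∫ x, (Rent v (η x)).toReal ∂μ) +
        (1 - t) * (∫ x, (Rent v (τ x)).toReal ∂μ) := by
  set P := convexHull ℝ (range v)
  have hR := strictConvexOn_Rent_toReal v
  obtain ⟨C, hC⟩ := exists_bound_Rent_toReal v
  have integrable_of_ae_interior {g : Ω → EuclideanSpace ℝ (Fin n)} (hg : Measurable g)
      (hgP : ∀ᵐ x ∂μ, g x ∈ interior P) : Integrable (fun x => (Rent v (g x)).toReal) μ :=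
    integrable_comp_of_continuousOn_of_bound isOpen_interior.measurableSet
      hR.convexOn.continuousOn_interior (fun x hx => hC x (interior_subset hx)) hg hgP
  obtain ⟨ε, hε, hηε⟩ := hηd
  obtain ⟨δ, hδ, hτδ⟩ := hτd
  have hηi : ∀ᵐ x ∂μ, η x ∈ interior P := by
    filter_upwards [hηP, hηε] with x hx hxε
    exact mem_interior_of_infDist_frontier_pos hx (hε.trans_le hxε)
  have hτi : ∀ᵐ x ∂μ, τ x ∈ interior P := by
    filter_upwards [hτP, hτδ] with x hx hxδ
    exact mem_interior_of_infDist_frontier_pos hx (hδ.trans_le hxδ)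
  have h1t : 0 < 1 - t := sub_pos.2 ht.2
  have hcomb : ∀ᵐ x ∂μ, t • η x + (1 - t) • τ x ∈ interior P := by
    filter_upwards [hηi, hτi] with x hηx hτx
    exact (convex_convexHull ℝ _).interior hηx hτx ht.1.le h1t.le (by ring)
  exact hR.integral_comp_add_lt hηP hτP ht.1 h1t (by ring)
    (integrable_of_ae_interior hηm hηi) (integrable_of_ae_interior hτm hτi)
    (integrable_of_ae_interior ((hηm.const_smul t).add (hτm.const_smul (1 - t))) hcomb) hneq

/-- Let `P = conv {v_1, …, v_q} ⊂ ℝⁿ` have nonempty interior and let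
`(Ω, μ)` be a finite measure space.  If `η` and `q̃` (here `τ`) are measurable,
essentially bounded, take values in `P` a.e., are each essentially uniformly
bounded away from `∂P`, and differ on a set of positive measure, then for every
`t ∈ (0, 1)`,
`∫ R(t η + (1−t) τ) dμ < t ∫ R(η) dμ + (1−t) ∫ R(τ) dμ`:
the integral functional `I_R` is strictly convex on designs uniformly bounded
away from `∂P`. -/
theorem integral_functional_strictly_convex {n q : ℕ}
    (v : Fin q → EuclideanSpace ℝ (Fin n))
    (hint : (interior (convexHull ℝ (Set.range v))).Nonempty)
    {Ω : Type*} [MeasurableSpace Ω] (μ : Measure Ω) [IsFiniteMeasure μ]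
    (η τ : Ω → EuclideanSpace ℝ (Fin n))
    (hηm : Measurable η) (hτm : Measurable τ)
    (hηb : ∃ C : ℝ, ∀ᵐ x ∂μ, ‖η x‖ ≤ C) (hτb : ∃ C : ℝ, ∀ᵐ x ∂μ, ‖τ x‖ ≤ C)
    (hηP : ∀ᵐ x ∂μ, η x ∈ convexHull ℝ (Set.range v))
    (hτP : ∀ᵐ x ∂μ, τ x ∈ convexHull ℝ (Set.range v))
    (hηd : ∃ ε > 0, ∀ᵐ x ∂μ,
      ε ≤ Metric.infDist (η x) (frontier (convexHull ℝ (Set.range v))))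
    (hτd : ∃ ε > 0, ∀ᵐ x ∂μ,
      ε ≤ Metric.infDist (τ x) (frontier (convexHull ℝ (Set.range v))))
    (hneq : 0 < μ {x | η x ≠ τ x})
    (t : ℝ) (ht : t ∈ Set.Ioo (0 : ℝ) 1) :
    (∫ x, (Rent v (t • η x + (1 - t) • τ x)).toReal ∂μ) <
      t * (∫ x, (Rent v (η x)).toReal ∂μ) +
        (1 - t) * (∫ x, (Rent v (τ x)).toReal ∂μ) :=
  integral_functional_strictly_convex_general v μ η τ hηm hτm hηP hτP hηd hτd hneq t ht
end
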